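/- arXiv:1004.0282 — 2 statements merged into one kernel-verified Lean document; each statement's English description precedes it below -/
import Mathlib

section
/- Let R_mc(t) denote the number of reduced 3×3 magic squares whose maximum entry equals t. Then for every integer t ≥ 1: R_mc(t) = 0 if t is odd; R_mc(t) = 2t−16 if t ≡ 0 (mod 12); R_mc(t) = 2t−4 if t ≡ 2 or 10 (mod 12); R_mc(t) = 2t−8 if t ≡ 4 or 8 (mod 12); and R_mc(t) = 2t−12 if t ≡ 6 (mod 12). -/
/-- A 3×3 magic square: all nine entries distinct, all row sums, column sums,
the main diagonal sum and the antidiagonal sum equal. -/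
def IsMagicSq (x : Matrix (Fin 3) (Fin 3) ℤ) : Prop :=
  (Function.Injective fun p : Fin 3 × Fin 3 => x p.1 p.2) ∧
  ∃ s : ℤ, (∀ i, ∑ j, x i j = s) ∧ (∀ j, ∑ i, x i j = s) ∧
    x 0 0 + x 1 1 + x 2 2 = s ∧ x 0 2 + x 1 1 + x 2 0 = s

/-- `Rmc t` = number of reduced 3×3 magic squares (nonnegative entries, minimum
entry 0) whose maximum entry equals t. -/
noncomputable def Rmc (t : ℕ) : ℕ :=
  {x : Matrix (Fin 3) (Fin 3) ℤ |
    IsMagicSq x ∧ (∀ i j, 0 ≤ x i j) ∧ (∃ i j, x i j = 0) ∧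
    (∀ i j, x i j ≤ (t : ℤ)) ∧ (∃ i j, x i j = (t : ℤ))}.ncard

/-!
Every 3×3 magic square with centre `c` has Lucas' form
`c + [[a, -a-b, b], [b-a, 0, a-b], [-b, a+b, -a]]`, and its entries are distinct exactly when
none of `a, b, a ± b, a ± 2b, 2a ± b` vanishes. The entries range over `c ± (|a| + |b|)`, so a
reduced square with maximum `t` has `c = |a| + |b|` and `t = 2c`; in particular `t` is even.
For `t = 2c` the pairs `(a, b)` are `(±k, ±(c - k))` with `0 < k < c`, where the excluded
magnitudes `k = c/2`, `k = c/3` and `k = 2c/3` occur according to the residue of `c` mod 6.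
-/

open Finset

def lucasSquare (c a b : ℤ) : Matrix (Fin 3) (Fin 3) ℤ :=
  !![c + a, c - a - b, c + b; c - a + b, c, c + a - b; c - b, c + a + b, c - a]

def LucasNondegenerate (a b : ℤ) : Prop :=
  a ≠ 0 ∧ b ≠ 0 ∧ a + b ≠ 0 ∧ a - b ≠ 0 ∧ a + 2 * b ≠ 0 ∧ a - 2 * b ≠ 0 ∧
    2 * a + b ≠ 0 ∧ 2 * a - b ≠ 0

lemma IsMagicSq.eq_lucasSquare {x : Matrix (Fin 3) (Fin 3) ℤ} (h : IsMagicSq x) :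
    x = lucasSquare (x 1 1) (x 0 0 - x 1 1) (x 0 2 - x 1 1) := by
  obtain ⟨_, s, hrow, hcol, hdiag, hanti⟩ := h
  have := hrow 0; have := hrow 1; have := hrow 2
  have := hcol 0; have := hcol 1; have := hcol 2
  simp only [Fin.sum_univ_three] at *
  ext i j
  fin_cases i <;> fin_cases j <;> simp [lucasSquare] <;> omega

lemma injective_lucasSquare_iff {c a b : ℤ} :
    Function.Injective (fun p : Fin 3 × Fin 3 => lucasSquare c a b p.1 p.2) ↔
      LucasNondegenerate a b := by
  constructor
  · intro h
    have cell (p q : Fin 3 × Fin 3) (hpq : p ≠ q) :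
        lucasSquare c a b p.1 p.2 ≠ lucasSquare c a b q.1 q.2 := fun e => hpq (h e)
    have : c + a ≠ c := cell (0, 0) (1, 1) (by decide)
    have : c + b ≠ c := cell (0, 2) (1, 1) (by decide)
    have : c + a ≠ c - b := cell (0, 0) (2, 0) (by decide)
    have : c + a ≠ c + b := cell (0, 0) (0, 2) (by decide)
    have : c + a + b ≠ c - b := cell (2, 1) (2, 0) (by decide)
    have : c + a - b ≠ c + b := cell (1, 2) (0, 2) (by decide)
    have : c + a + b ≠ c - a := cell (2, 1) (2, 2) (by decide)
    have : c - a + b ≠ c + a := cell (1, 0) (0, 0) (by decide)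
    unfold LucasNondegenerate
    omega
  · rintro h ⟨i, j⟩ ⟨k, l⟩ e
    unfold LucasNondegenerate at h
    fin_cases i <;> fin_cases j <;> fin_cases k <;> fin_cases l <;>
      first | rfl | (exfalso; simp [lucasSquare] at e; omega)

lemma isMagicSq_lucasSquare_iff {c a b : ℤ} :
    IsMagicSq (lucasSquare c a b) ↔ LucasNondegenerate a b := by
  refine ⟨fun h => injective_lucasSquare_iff.mp h.1, fun h => ⟨injective_lucasSquare_iff.mpr h,
    3 * c, fun i => ?_, fun j => ?_, ?_, ?_⟩⟩
  · fin_cases i <;> simp [lucasSquare, Fin.sum_univ_three] <;> ring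
  · fin_cases j <;> simp [lucasSquare, Fin.sum_univ_three] <;> ring
  · show c + a + c + (c - a) = 3 * c; ring
  · show c + b + c + (c - b) = 3 * c; ring

lemma lucasSquare_apply_le (c a b : ℤ) (i j : Fin 3) :
    lucasSquare c a b i j ≤ c + |a| + |b| := by
  have := le_abs_self a; have := neg_le_abs a; have := le_abs_self b; have := neg_le_abs b
  fin_cases i <;> fin_cases j <;> simp [lucasSquare] <;> omega

lemma le_lucasSquare_apply (c a b : ℤ) (i j : Fin 3) :
    c - |a| - |b| ≤ lucasSquare c a b i j := by
  have := le_abs_self a; have := neg_le_abs a; have := le_abs_self b; have := neg_le_abs b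
  fin_cases i <;> fin_cases j <;> simp [lucasSquare] <;> omega

lemma exists_lucasSquare_apply_eq_add (c a b : ℤ) :
    ∃ i j, lucasSquare c a b i j = c + |a| + |b| := by
  rcases abs_cases a with ha | ha <;> rcases abs_cases b with hb | hb
  · exact ⟨2, 1, by simp [lucasSquare]; omega⟩
  · exact ⟨1, 2, by simp [lucasSquare]; omega⟩
  · exact ⟨1, 0, by simp [lucasSquare]; omega⟩
  · exact ⟨0, 1, by simp [lucasSquare]; omega⟩

lemma exists_lucasSquare_apply_eq_sub (c a b : ℤ) :
    ∃ i j, lucasSquare c a b i j = c - |a| - |b| := by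
  rcases abs_cases a with ha | ha <;> rcases abs_cases b with hb | hb
  · exact ⟨0, 1, by simp [lucasSquare]; omega⟩
  · exact ⟨1, 0, by simp [lucasSquare]; omega⟩
  · exact ⟨1, 2, by simp [lucasSquare]; omega⟩
  · exact ⟨2, 1, by simp [lucasSquare]; omega⟩

def IsReducedMagicSq (t : ℕ) (x : Matrix (Fin 3) (Fin 3) ℤ) : Prop :=
  IsMagicSq x ∧ (∀ i j, 0 ≤ x i j) ∧ (∃ i j, x i j = 0) ∧
    (∀ i j, x i j ≤ (t : ℤ)) ∧ (∃ i j, x i j = (t : ℤ))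

def reducedLucasSquare (p : ℤ × ℤ) : Matrix (Fin 3) (Fin 3) ℤ :=
  lucasSquare (|p.1| + |p.2|) p.1 p.2

lemma reducedLucasSquare_injective : Function.Injective reducedLucasSquare := by
  intro p q h
  have h11 : |p.1| + |p.2| = |q.1| + |q.2| := congrFun (congrFun h 1) 1
  have h00 : |p.1| + |p.2| + p.1 = |q.1| + |q.2| + q.1 := congrFun (congrFun h 0) 0
  have h02 : |p.1| + |p.2| + p.2 = |q.1| + |q.2| + q.2 := congrFun (congrFun h 0) 2
  exact Prod.ext (by omega) (by omega)

lemma isReducedMagicSq_reducedLucasSquare {t : ℕ} {a b : ℤ} (hab : LucasNondegenerate a b)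
    (ht : 2 * (|a| + |b|) = t) : IsReducedMagicSq t (reducedLucasSquare (a, b)) := by
  obtain ⟨i₀, j₀, hmin⟩ := exists_lucasSquare_apply_eq_sub (|a| + |b|) a b
  obtain ⟨i₁, j₁, hmax⟩ := exists_lucasSquare_apply_eq_add (|a| + |b|) a b
  refine ⟨isMagicSq_lucasSquare_iff.mpr hab, fun i j => ?_, ⟨i₀, j₀, ?_⟩, fun i j => ?_,
    ⟨i₁, j₁, ?_⟩⟩
  · have := le_lucasSquare_apply (|a| + |b|) a b i j
    simp only [reducedLucasSquare]; omega
  · simp only [reducedLucasSquare]; omega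
  · have := lucasSquare_apply_le (|a| + |b|) a b i j
    simp only [reducedLucasSquare]; omega
  · simp only [reducedLucasSquare]; omega

lemma IsReducedMagicSq.exists_reducedLucasSquare_eq {t : ℕ} {x : Matrix (Fin 3) (Fin 3) ℤ}
    (h : IsReducedMagicSq t x) :
    ∃ p : ℤ × ℤ, (LucasNondegenerate p.1 p.2 ∧ 2 * (|p.1| + |p.2|) = t) ∧
      reducedLucasSquare p = x := by
  obtain ⟨hx, hnonneg, hzero, hle, htop⟩ := h
  set c := x 1 1
  set a := x 0 0 - c
  set b := x 0 2 - c
  have hxL : x = lucasSquare c a b := hx.eq_lucasSquare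
  rw [hxL] at hx hnonneg hzero hle htop
  obtain ⟨i₀, j₀, hmin⟩ := exists_lucasSquare_apply_eq_sub c a b
  obtain ⟨i₁, j₁, hmax⟩ := exists_lucasSquare_apply_eq_add c a b
  obtain ⟨i₂, j₂, h₂⟩ := hzero
  obtain ⟨i₃, j₃, h₃⟩ := htop
  have := hnonneg i₀ j₀
  have := hle i₁ j₁
  have := le_lucasSquare_apply c a b i₂ j₂
  have := lucasSquare_apply_le c a b i₃ j₃
  have hc : c = |a| + |b| := by omega
  refine ⟨(a, b), ⟨isMagicSq_lucasSquare_iff.mp hx, by dsimp only; omega⟩, ?_⟩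
  rw [reducedLucasSquare, ← hc, hxL]

lemma rmc_eq_ncard (t : ℕ) :
    Rmc t = {p : ℤ × ℤ | LucasNondegenerate p.1 p.2 ∧ 2 * (|p.1| + |p.2|) = t}.ncard := by
  change {x | IsReducedMagicSq t x}.ncard = _
  rw [← Set.ncard_image_of_injective _ reducedLucasSquare_injective]
  congr 1
  ext x
  constructor
  · exact IsReducedMagicSq.exists_reducedLucasSquare_eq
  · rintro ⟨⟨a, b⟩, ⟨hab, ht⟩, rfl⟩
    exact isReducedMagicSq_reducedLucasSquare hab ht

instance (a b : ℤ) : Decidable (LucasNondegenerate a b) := by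
  unfold LucasNondegenerate; infer_instance

/-- The possible values of `|a|` when `|a| + |b| = c`. -/
noncomputable def admissibleMagnitudes (c : ℕ) : Finset ℤ :=
  (Icc 1 ((c : ℤ) - 1)).filter fun k => LucasNondegenerate k (c - k)

lemma card_admissibleMagnitudes {c : ℕ} (hc : 1 ≤ c) :
    ((admissibleMagnitudes c).card : ℤ) =
      c - 1 - (if 2 ∣ c then 1 else 0) - (if 3 ∣ c then 2 else 0) := by
  have hsplit := card_filter_add_card_filter_not (s := Icc 1 ((c : ℤ) - 1))
    fun k => LucasNondegenerate k (c - k)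
  have hdegenerate : (Icc 1 ((c : ℤ) - 1)).filter (fun k => ¬LucasNondegenerate k (c - k)) =
      (if 2 ∣ c then {(c : ℤ) / 2} else ∅) ∪
        (if 3 ∣ c then {(c : ℤ) / 3, 2 * (c : ℤ) / 3} else ∅) := by
    ext k
    rw [mem_filter, mem_Icc, mem_union, LucasNondegenerate]
    split_ifs <;>
      simp only [ne_eq, not_and_or, not_not, mem_insert, mem_singleton, notMem_empty,
        or_false, false_or, iff_false] <;>
      omega
  rw [hdegenerate, Int.card_Icc] at hsplit
  rw [admissibleMagnitudes]
  split_ifs at hsplit ⊢ with h2 h3 h3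
  · rw [card_union_of_disjoint
      (by rw [disjoint_singleton_left, mem_insert, mem_singleton]; omega), card_singleton,
      card_pair (by omega)] at hsplit
    omega
  · rw [union_empty, card_singleton] at hsplit; omega
  · rw [empty_union, card_pair (by omega)] at hsplit; omega
  · rw [union_empty, card_empty] at hsplit; omega

lemma ncard_lucasNondegenerate (c : ℕ) :
    {p : ℤ × ℤ | LucasNondegenerate p.1 p.2 ∧ 2 * (|p.1| + |p.2|) = 2 * (c : ℤ)}.ncard =
      4 * (admissibleMagnitudes c).card := by
  set signs : Finset ℤ := {-1, 1}
  set signed : (ℤ × ℤ) × ℤ → ℤ × ℤ := fun q => (q.1.1 * q.2, q.1.2 * (c - q.2))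
  have hset : {p : ℤ × ℤ | LucasNondegenerate p.1 p.2 ∧ 2 * (|p.1| + |p.2|) = 2 * (c : ℤ)} =
      (((signs ×ˢ signs) ×ˢ admissibleMagnitudes c).image signed : Set (ℤ × ℤ)) := by
    ext ⟨a, b⟩
    simp only [Set.mem_ofPred_eq, coe_image, Set.mem_image, mem_coe, mem_product, signs,
      mem_insert, mem_singleton, admissibleMagnitudes, mem_filter, mem_Icc, Prod.exists,
      Prod.mk.injEq, signed]
    unfold LucasNondegenerate
    constructor
    · rintro ⟨hab, hsum⟩
      rcases abs_cases a with ha | ha <;> rcases abs_cases b with hb | hb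
      exacts [⟨1, 1, a, by omega⟩, ⟨1, -1, a, by omega⟩, ⟨-1, 1, -a, by omega⟩,
        ⟨-1, -1, -a, by omega⟩]
    · rintro ⟨s, s', k, ⟨⟨hs | hs, hs' | hs'⟩, hk, hnd⟩, rfl, rfl⟩ <;> subst hs hs' <;>
        simp only [neg_one_mul, one_mul, abs_neg] <;>
        rw [abs_of_pos (by omega), abs_of_pos (by omega)] <;> omega
  have hinj : Set.InjOn signed ((signs ×ˢ signs) ×ˢ admissibleMagnitudes c : Finset _) := by
    rintro ⟨⟨s₁, s₂⟩, k⟩ hq ⟨⟨s₁', s₂'⟩, k'⟩ hq' he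
    simp only [coe_product, Set.mem_prod, mem_coe, signs, mem_insert, mem_singleton,
      admissibleMagnitudes, mem_filter, mem_Icc, signed, Prod.mk.injEq] at hq hq' he ⊢
    obtain ⟨⟨hs₁ | hs₁, hs₂ | hs₂⟩, hk, -⟩ := hq
    all_goals obtain ⟨⟨hs₁' | hs₁', hs₂' | hs₂'⟩, hk', -⟩ := hq'
    all_goals subst hs₁ hs₂ hs₁' hs₂'; omega
  rw [hset, Set.ncard_coe_finset, card_image_of_injOn hinj, card_product, card_product,
    card_pair (by decide)]

lemma rmc_eq_zero_of_odd {t : ℕ} (ht : Odd t) : Rmc t = 0 := by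
  obtain ⟨k, rfl⟩ := ht
  rw [rmc_eq_ncard, ← Set.ncard_empty (ℤ × ℤ)]
  congr 1
  ext p
  simp only [Set.mem_ofPred_eq, Set.mem_empty_iff_false, iff_false, not_and]
  intro _ h
  omega

lemma rmc_two_mul {c : ℕ} (hc : 1 ≤ c) :
    (Rmc (2 * c) : ℤ) = 4 * (c - 1 - (if 2 ∣ c then 1 else 0) - (if 3 ∣ c then 2 else 0)) := by
  rw [rmc_eq_ncard, Nat.cast_mul, Nat.cast_two, ncard_lucasNondegenerate, Nat.cast_mul,
    card_admissibleMagnitudes hc, Nat.cast_ofNat]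

theorem reduced_magic_cubic_count (t : ℕ) (ht : 1 ≤ t) :
    (Odd t → Rmc t = 0) ∧
    (t % 12 = 0 → (Rmc t : ℤ) = 2 * (t : ℤ) - 16) ∧
    ((t % 12 = 2 ∨ t % 12 = 10) → (Rmc t : ℤ) = 2 * (t : ℤ) - 4) ∧
    ((t % 12 = 4 ∨ t % 12 = 8) → (Rmc t : ℤ) = 2 * (t : ℤ) - 8) ∧
    (t % 12 = 6 → (Rmc t : ℤ) = 2 * (t : ℤ) - 12) := by
  refine ⟨rmc_eq_zero_of_odd, ?_, ?_, ?_, ?_⟩ <;> intro hmod <;>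
    obtain ⟨c, rfl⟩ : ∃ c, t = 2 * c := ⟨t / 2, by omega⟩ <;>
    rw [rmc_two_mul (by omega)] <;> split_ifs <;> omega
end

section
/- For every integer t ≥ 1, the number of 3×3 matrices of integers with all entries strictly between 0 and t (entries not required to be distinct) in which the three row sums and the three column sums are all equal to a common value, is (t−1)(t²−2t+2)(3t²−6t+5)/10. -/
/-- `WeakSc t` = number of weak 3×3 semimagic squares (entries not required to
be distinct) all of whose entries lie strictly between 0 and t. -/
noncomputable def WeakSc (t : ℕ) : ℕ :=
  {x : Matrix (Fin 3) (Fin 3) ℤ |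
    (∃ s : ℤ, (∀ i, ∑ j, x i j = s) ∧ (∀ j, ∑ i, x i j = s)) ∧
    ∀ i j, 0 < x i j ∧ x i j < (t : ℤ)}.ncard

open Finset


-- power sum lemma
lemma sum_poly (n : ℕ) (a b c d e : ℤ) :
    60 * ∑ l ∈ Finset.range n, (a + b*(l:ℤ) + c*(l:ℤ)^2 + d*(l:ℤ)^3 + e*(l:ℤ)^4)
    = 60*a*n + 30*b*(n*(n-1)) + 10*c*(n*(n-1)*(2*n-1)) + 15*d*(n^2*(n-1)^2)
      + 2*e*(n*(n-1)*(2*n-1)*(3*(n:ℤ)^2-3*n-1)) := by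
  induction n with
  | zero => simp
  | succ n ih =>
    rw [Finset.sum_range_succ, mul_add, ih]
    push_cast
    ring

lemma key (u : ℕ) :
    10 * ∑ l ∈ Finset.range (u+1),
        (3*(l:ℤ)^2+3*l+1) * (3*((u:ℤ)-l)^2+3*((u:ℤ)-l)+1)
    = ((u:ℤ)+1)*(((u:ℤ)+1)^2+1)*(3*((u:ℤ)+1)^2+2) := by
  have h : ∀ l ∈ Finset.range (u+1),
      (3*(l:ℤ)^2+3*l+1) * (3*((u:ℤ)-l)^2+3*((u:ℤ)-l)+1)
      = (3*(u:ℤ)^2+3*u+1) + (9*(u:ℤ)^2+3*u)*(l:ℤ) + (9*(u:ℤ)^2-9*u-3)*(l:ℤ)^2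
        + (-18*(u:ℤ))*(l:ℤ)^3 + 9*(l:ℤ)^4 := by
    intro l _; ring
  rw [Finset.sum_congr rfl h]
  have := sum_poly (u+1) (3*(u:ℤ)^2+3*u+1) (9*(u:ℤ)^2+3*u) (9*(u:ℤ)^2-9*u-3) (-18*(u:ℤ)) 9
  push_cast at this ⊢
  linarith


def cube (u : ℕ) : Finset (Fin 3 → ℕ) := Fintype.piFinset fun _ => Finset.range (u+1)

def Dfin (u : ℕ) : Finset ((Fin 3 → ℕ) × (Fin 3 → ℕ)) :=
  ((cube u) ×ˢ (cube u)).filter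
    (fun p => (∃ i, p.1 i = 0) ∧ ∀ i j, p.1 i + p.2 j ≤ u)

lemma forall3 {P : Fin 3 → Prop} : (∀ i, P i) ↔ P 0 ∧ P 1 ∧ P 2 :=
  ⟨fun h => ⟨h 0, h 1, h 2⟩, by rintro ⟨a,b,c⟩ i; fin_cases i <;> assumption⟩

lemma exists3 {P : Fin 3 → Prop} : (∃ i, P i) ↔ P 0 ∨ P 1 ∨ P 2 := by
  constructor
  · rintro ⟨i, hi⟩; fin_cases i
    · exact Or.inl hi
    · exact Or.inr (Or.inl hi)
    · exact Or.inr (Or.inr hi)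
  · rintro (h|h|h); exacts [⟨0,h⟩, ⟨1,h⟩, ⟨2,h⟩]

lemma mem_cube {u : ℕ} {A : Fin 3 → ℕ} : A ∈ cube u ↔ A 0 ≤ u ∧ A 1 ≤ u ∧ A 2 ≤ u := by
  simp [cube, Fintype.mem_piFinset, Nat.lt_succ_iff, forall3]

lemma card_pi_le (u M : ℕ) (h : M ≤ u) :
    ((cube u).filter fun B => ∀ j, B j ≤ M).card = (M+1)^3 := by
  have e : ((cube u).filter fun B => ∀ j, B j ≤ M)
      = Fintype.piFinset fun _ : Fin 3 => Finset.range (M+1) := by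
    ext B
    simp only [mem_filter, mem_cube, Fintype.mem_piFinset, Finset.mem_range,
      Nat.lt_succ_iff, forall3]
    omega
  rw [e, Fintype.card_piFinset]
  simp

lemma card_pi_lt (u M : ℕ) (h : M ≤ u) :
    ((cube u).filter fun B => ∀ j, B j < M).card = M^3 := by
  have e : ((cube u).filter fun B => ∀ j, B j < M)
      = Fintype.piFinset fun _ : Fin 3 => Finset.range M := by
    ext B
    simp only [mem_filter, mem_cube, Fintype.mem_piFinset, Finset.mem_range, forall3]
    omega
  rw [e, Fintype.card_piFinset]
  simp

lemma card_zero_le (u M : ℕ) (h : M ≤ u) :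
    ((cube u).filter fun A => (∃ i, A i = 0) ∧ ∀ i, A i ≤ M).card = (M+1)^3 - M^3 := by
  have e : ((cube u).filter fun A => (∃ i, A i = 0) ∧ ∀ i, A i ≤ M)
      = ((cube u).filter fun B => ∀ j, B j ≤ M)
        \ ((cube u).filter fun B => ∀ j, 1 ≤ B j ∧ B j ≤ M) := by
    ext A
    simp only [mem_filter, mem_sdiff, mem_cube, forall3, exists3, not_and]
    omega
  rw [e, card_sdiff_of_subset, card_pi_le u M h]
  · congr 1
    have e2 : ((cube u).filter fun B => ∀ j, 1 ≤ B j ∧ B j ≤ M)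
        = Fintype.piFinset fun _ : Fin 3 => Finset.Icc 1 M := by
      ext B
      simp only [mem_filter, mem_cube, Fintype.mem_piFinset, Finset.mem_Icc, forall3]
      omega
    rw [e2, Fintype.card_piFinset]
    simp
  · intro B hB
    simp only [mem_filter, mem_cube, forall3] at hB ⊢
    omega

lemma card_max_eq (u l : ℕ) (h : l ≤ u) :
    ((cube u).filter fun B => (∀ j, B j ≤ l) ∧ ¬ ∀ j, B j < l).card = (l+1)^3 - l^3 := by
  have e : ((cube u).filter fun B => (∀ j, B j ≤ l) ∧ ¬ ∀ j, B j < l)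
      = ((cube u).filter fun B => ∀ j, B j ≤ l) \ ((cube u).filter fun B => ∀ j, B j < l) := by
    ext B
    simp only [mem_filter, mem_sdiff, mem_cube, forall3, not_and]
    omega
  rw [e, card_sdiff_of_subset, card_pi_le u l h, card_pi_lt u l h]
  intro B hB
  simp only [mem_filter, mem_cube, forall3] at hB ⊢
  omega

lemma card_Dfin (u : ℕ) :
    (Dfin u).card = ∑ l ∈ Finset.range (u+1), ((l+1)^3 - l^3) * ((u-l+1)^3 - (u-l)^3) := by
  have step1 : (Dfin u).card
      = ∑ B ∈ cube u, ((u - max (B 0) (max (B 1) (B 2)) + 1)^3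
          - (u - max (B 0) (max (B 1) (B 2)))^3) := by
    rw [Dfin, card_filter, Finset.sum_product_right]
    apply Finset.sum_congr rfl
    intro B hB
    rw [← card_filter]
    have e : ((cube u).filter fun A => (∃ i, A i = 0) ∧ ∀ i j, A i + B j ≤ u)
        = ((cube u).filter fun A =>
            (∃ i, A i = 0) ∧ ∀ i, A i ≤ u - max (B 0) (max (B 1) (B 2))) := by
      apply Finset.filter_congr
      intro A hA
      simp only [mem_cube] at hB hA
      constructor
      · rintro ⟨hz, hle⟩
        refine ⟨hz, ?_⟩
        simp only [forall3] at hle ⊢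
        omega
      · rintro ⟨hz, hle⟩
        refine ⟨hz, ?_⟩
        simp only [forall3] at hle ⊢
        omega
    rw [e, card_zero_le u _ (by omega)]
  rw [step1]
  clear step1
  have hmap : ∀ B ∈ cube u, max (B 0) (max (B 1) (B 2)) ∈ Finset.range (u+1) := by
    intro B hB
    simp only [mem_cube] at hB
    simp only [Finset.mem_range]
    omega
  rw [← Finset.sum_fiberwise_of_maps_to hmap]
  apply Finset.sum_congr rfl
  intro l hl
  have hlu : l ≤ u := by
    have := Finset.mem_range.mp hl
    omega
  have e1 : ∀ B ∈ (cube u).filter (fun B => max (B 0) (max (B 1) (B 2)) = l),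
      ((u - max (B 0) (max (B 1) (B 2)) + 1)^3 - (u - max (B 0) (max (B 1) (B 2)))^3)
      = ((u - l + 1)^3 - (u - l)^3) := by
    intro B hB
    simp only [mem_filter] at hB
    rw [hB.2]
  rw [Finset.sum_congr rfl e1, Finset.sum_const, smul_eq_mul]
  clear e1
  congr 1
  rw [← card_max_eq u l hlu]
  congr 1
  apply Finset.filter_congr
  intro B hB
  simp only [mem_cube] at hB
  simp only [forall3]
  omega

lemma cast_card_Dfin (u : ℕ) :
    ((Dfin u).card : ℤ) = ∑ l ∈ Finset.range (u+1),
        (3*(l:ℤ)^2+3*l+1) * (3*((u:ℤ)-l)^2+3*((u:ℤ)-l)+1) := by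
  rw [card_Dfin, Nat.cast_sum]
  apply Finset.sum_congr rfl
  intro l hl
  have hlu : l ≤ u := by simp at hl; omega
  obtain ⟨k, rfl⟩ : ∃ k, u = l + k := ⟨u - l, by omega⟩
  have h1 : l^3 ≤ (l+1)^3 := Nat.pow_le_pow_left (by omega) 3
  have h2 : (l + k - l) ^ 3 ≤ (l + k - l + 1)^3 := Nat.pow_le_pow_left (by omega) 3
  rw [Nat.cast_mul, Nat.cast_sub h1, Nat.cast_sub h2]
  have h3 : l + k - l = k := by omega
  rw [h3]
  push_cast
  ring

def Phi (p : (Fin 3 → ℕ) × (Fin 3 → ℕ)) : Matrix (Fin 3) (Fin 3) ℤ :=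
  fun i j => 1 + (p.1 (j - i) : ℤ) + (p.2 (i + j) : ℤ)

lemma Phi_mem (u : ℕ) (p : (Fin 3 → ℕ) × (Fin 3 → ℕ)) (hp : p ∈ Dfin u) :
    Phi p ∈ {x : Matrix (Fin 3) (Fin 3) ℤ |
      (∃ s : ℤ, (∀ i, ∑ j, x i j = s) ∧ (∀ j, ∑ i, x i j = s)) ∧
      ∀ i j, 0 < x i j ∧ x i j < ((u+2 : ℕ) : ℤ)} := by
  obtain ⟨A, B⟩ := p
  rw [Dfin, Finset.mem_filter] at hp
  obtain ⟨-, -, hle'⟩ := hp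
  have hle : ∀ i j, A i + B j ≤ u := hle'
  have m1 : (-1 : Fin 3) = 2 := rfl
  have m2 : (-2 : Fin 3) = 1 := rfl
  constructor
  · refine ⟨3 + ((A 0 : ℤ) + A 1 + A 2) + ((B 0 : ℤ) + B 1 + B 2), ?_, ?_⟩
    · intro i
      rw [Fin.sum_univ_three]
      fin_cases i <;> simp [Phi, m1, m2] <;> push_cast <;> ring
    · intro j
      rw [Fin.sum_univ_three]
      fin_cases j <;> simp [Phi, m1, m2] <;> push_cast <;> ring
  · intro i j
    have h1 := hle (j - i) (i + j)
    constructor <;> simp only [Phi] <;> push_cast <;> omega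

lemma Phi_surj (u : ℕ) (x : Matrix (Fin 3) (Fin 3) ℤ)
    (hx : x ∈ {x : Matrix (Fin 3) (Fin 3) ℤ |
      (∃ s : ℤ, (∀ i, ∑ j, x i j = s) ∧ (∀ j, ∑ i, x i j = s)) ∧
      ∀ i j, 0 < x i j ∧ x i j < ((u+2 : ℕ) : ℤ)}) :
    x ∈ Phi '' ↑(Dfin u) := by
  obtain ⟨⟨s, hr, hc⟩, hb⟩ := hx
  have e0 := hr 0; have e1 := hr 1; have e2 := hr 2
  have f0 := hc 0; have f1 := hc 1; have f2 := hc 2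
  rw [Fin.sum_univ_three] at e0 e1 e2 f0 f1 f2
  have b00 := hb 0 0; have b01 := hb 0 1; have b02 := hb 0 2
  have b10 := hb 1 0; have b11 := hb 1 1; have b12 := hb 1 2
  have b20 := hb 2 0; have b21 := hb 2 1; have b22 := hb 2 2
  clear hr hc hb
  set α := min 0 (min (x 1 2 - x 0 0) (x 2 1 - x 0 0)) with hα
  refine ⟨(![(-α).toNat, (x 1 2 - x 0 0 - α).toNat, (x 2 1 - x 0 0 - α).toNat],
           ![(x 0 0 - 1 + α).toNat, (x 2 2 - 1 + α).toNat, (x 1 1 - 1 + α).toNat]), ?_, ?_⟩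
  · rw [Finset.mem_coe, Dfin, Finset.mem_filter]
    refine ⟨Finset.mem_product.mpr ⟨mem_cube.mpr ?_, mem_cube.mpr ?_⟩, ?_, ?_⟩
    · simp only [Matrix.cons_val_zero, Matrix.cons_val_one, Matrix.head_cons,
        Matrix.cons_val_two, Matrix.tail_cons]
      refine ⟨?_, ?_, ?_⟩ <;> omega
    · simp only [Matrix.cons_val_zero, Matrix.cons_val_one, Matrix.head_cons,
        Matrix.cons_val_two, Matrix.tail_cons]
      refine ⟨?_, ?_, ?_⟩ <;> omega
    · have h3 : (-α).toNat = 0 ∨ (x 1 2 - x 0 0 - α).toNat = 0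
          ∨ (x 2 1 - x 0 0 - α).toNat = 0 := by omega
      rcases h3 with h3|h3|h3
      exacts [⟨0, by simpa using h3⟩, ⟨1, by simpa using h3⟩, ⟨2, by simpa using h3⟩]
    · intro a b
      fin_cases a <;> fin_cases b <;>
        simp only [Matrix.cons_val_zero, Matrix.cons_val_one, Matrix.head_cons,
          Matrix.cons_val_two, Matrix.tail_cons, Fin.zero_eta, Fin.mk_one,
          Fin.reduceFinMk, Fin.isValue] <;>
        omega
  · funext i j
    have m1 : (-1 : Fin 3) = 2 := rfl
    have m2 : (-2 : Fin 3) = 1 := rfl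
    fin_cases i <;> fin_cases j <;>
      simp [Phi, m1, m2, Fin.zero_eta, Fin.mk_one, Fin.reduceFinMk, Fin.isValue] <;>
      omega

lemma Phi_injOn (u : ℕ) : Set.InjOn Phi ↑(Dfin u) := by
  rintro ⟨A, B⟩ hp ⟨C, D⟩ hq h
  rw [Finset.mem_coe, Dfin, Finset.mem_filter] at hp hq
  obtain ⟨-, hzp, -⟩ := hp
  obtain ⟨-, hzq, -⟩ := hq
  have hzp' : A 0 = 0 ∨ A 1 = 0 ∨ A 2 = 0 := by
    obtain ⟨i, hi⟩ := hzp
    fin_cases i <;> simp at hi <;> tauto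
  have hzq' : C 0 = 0 ∨ C 1 = 0 ∨ C 2 = 0 := by
    obtain ⟨i, hi⟩ := hzq
    fin_cases i <;> simp at hi <;> tauto
  have r1 : (0:Fin 3) - 0 = 0 := rfl
  have r2 : (1:Fin 3) - 0 = 1 := rfl
  have r3 : (2:Fin 3) - 0 = 2 := rfl
  have r4 : (0:Fin 3) - 1 = 2 := rfl
  have r5 : (1:Fin 3) - 1 = 0 := rfl
  have r6 : (2:Fin 3) - 1 = 1 := rfl
  have r7 : (0:Fin 3) - 2 = 1 := rfl
  have r8 : (1:Fin 3) - 2 = 2 := rfl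
  have r9 : (2:Fin 3) - 2 = 0 := rfl
  have a1 : (0:Fin 3) + 0 = 0 := rfl
  have a2 : (0:Fin 3) + 1 = 1 := rfl
  have a3 : (0:Fin 3) + 2 = 2 := rfl
  have a4 : (1:Fin 3) + 0 = 1 := rfl
  have a5 : (1:Fin 3) + 1 = 2 := rfl
  have a6 : (1:Fin 3) + 2 = 0 := rfl
  have a7 : (2:Fin 3) + 0 = 2 := rfl
  have a8 : (2:Fin 3) + 1 = 0 := rfl
  have a9 : (2:Fin 3) + 2 = 1 := rfl
  have E00 := congrFun (congrFun h 0) 0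
  have E01 := congrFun (congrFun h 0) 1
  have E02 := congrFun (congrFun h 0) 2
  have E10 := congrFun (congrFun h 1) 0
  have E11 := congrFun (congrFun h 1) 1
  have E12 := congrFun (congrFun h 1) 2
  have E20 := congrFun (congrFun h 2) 0
  have E21 := congrFun (congrFun h 2) 1
  have E22 := congrFun (congrFun h 2) 2
  simp only [Phi, r1, r2, r3, r4, r5, r6, r7, r8, r9, a1, a2, a3, a4, a5, a6, a7, a8, a9]
    at E00 E01 E02 E10 E11 E12 E20 E21 E22
  refine Prod.ext ?_ ?_ <;> · funext c; fin_cases c <;>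
    simp only [Fin.zero_eta, Fin.mk_one, Fin.reduceFinMk, Fin.isValue] <;> omega


lemma setEq (u : ℕ) :
    {x : Matrix (Fin 3) (Fin 3) ℤ |
      (∃ s : ℤ, (∀ i, ∑ j, x i j = s) ∧ (∀ j, ∑ i, x i j = s)) ∧
      ∀ i j, 0 < x i j ∧ x i j < ((u+2 : ℕ) : ℤ)} = Phi '' ↑(Dfin u) := by
  apply Set.Subset.antisymm
  · intro x hx
    exact Phi_surj u x hx
  · rintro x ⟨p, hp, rfl⟩
    exact Phi_mem u p (Finset.mem_coe.mp hp)

theorem weak_semimagic_cubic_count (t : ℕ) (ht : 1 ≤ t) :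
    10 * (WeakSc t : ℤ) =
      ((t : ℤ) - 1) * ((t : ℤ)^2 - 2*(t : ℤ) + 2) * (3*(t : ℤ)^2 - 6*(t : ℤ) + 5) := by
  obtain rfl | ⟨u, rfl⟩ : t = 1 ∨ ∃ u, t = u + 2 := by
    rcases t with _ | _ | t
    · omega
    · exact Or.inl rfl
    · exact Or.inr ⟨t, rfl⟩
  · have h0 : WeakSc 1 = 0 := by
      unfold WeakSc
      convert Set.ncard_empty (Matrix (Fin 3) (Fin 3) ℤ)
      ext x
      simp only [Set.mem_setOf_eq, Set.mem_empty_iff_false, iff_false]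
      rintro ⟨-, hb⟩
      have := hb 0 0
      have h1 : ((1 : ℕ) : ℤ) = 1 := by norm_num
      omega
    rw [h0]
    norm_num
  · have h1 : WeakSc (u+2) = (Dfin u).card := by
      unfold WeakSc
      rw [setEq u, Set.ncard_image_of_injOn (Phi_injOn u), Set.ncard_coe_finset]
    rw [h1, cast_card_Dfin, key u]
    push_cast
    ring
end
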